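/- (Lemma 2, core dichotomy) Let V : ((Fin N) → ℝ³) → ℝ be C², invariant under the diagonal O(3)-action and under a permutation σ of Fin N. Let r‡ be a stationary point of V whose Hessian has a one-dimensional negative eigenspace spanned by a unit vector e. Let γ₊, γ₋ : ℝ → ((Fin N) → ℝ³) be solutions of dγ/ds = −∇V(γ(s)) with ∇V(γ±(s)) ≠ 0 for all s, lim_{s→−∞} γ±(s) = r‡, lim_{s→−∞} −∇V(γ±(s))/‖∇V(γ±(s))‖ = ±e, lim_{s→+∞} γ₋(s) = r_R, and lim_{s→+∞} γ₊(s) = r_P. Assume the uniqueness property: any two solutions of the gradient flow that converge as s→−∞ to the same point with the same limiting normalized negative-gradient direction coincide up to a parameter translation s ↦ s + s₀. If σ·r‡ = g·r‡ for some A ∈ O(3) acting diagonally as g, then either (g·r_R = σ·r_R and g·r_P = σ·r_P) or (g·r_R = σ·r_P and g·r_P = σ·r_R). -/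

import Mathlib

/-!
The symmetry `L = g⁻¹ ∘ σ` is a linear isometry preserving `V`, so it commutes with `∇V`, maps
gradient-flow lines to gradient-flow lines and, since it fixes `r‡`, commutes with the Hessian
there. Hence `L` preserves the one-dimensional negative eigenspace: `L e = e` or `L e = -e`.
The image under `L` of the flow line leaving `r‡` in direction `d` is a flow line leaving `r‡` in
direction `L d`; by uniqueness it is a reparametrisation of the path leaving in that direction,
so `L` maps its endpoint to that path's endpoint. For `L e = e` both endpoints are fixed, for
`L e = -e` they are exchanged.
-/

open Filter

/-- The configuration space `(ℝ³)^N` with its standard Euclidean inner product. -/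
noncomputable abbrev Conf (N : ℕ) : Type :=
  PiLp 2 (fun _ : Fin N => EuclideanSpace ℝ (Fin 3))

/-- The permutation action on configurations and tangent vectors: `(σ·r) i = r (σ i)`. -/
noncomputable def permAct (N : ℕ) (σ : Equiv.Perm (Fin N)) (r : Conf N) : Conf N :=
  WithLp.toLp 2 (fun i => r (σ i))

/-- The diagonal action of a `3 × 3` matrix `A` on configurations and tangent vectors:
`(g·r) i = A (r i)`. -/
noncomputable def rotAct (N : ℕ) (A : Matrix (Fin 3) (Fin 3) ℝ) (r : Conf N) : Conf N :=
  WithLp.toLp 2 (fun i => Matrix.toEuclideanLin A (r i))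

open Topology

section GradientFlow

variable {F : Type*} [NormedAddCommGroup F] [InnerProductSpace ℝ F]

theorem HasFDerivAt.apply_map_eq_of_comp_eq {G : F → F} {T : F →L[ℝ] F} {p : F}
    (hG : HasFDerivAt G T p) (L : F →L[ℝ] F) (hGL : G ∘ L = L ∘ G) (hp : L p = p) (v : F) :
    T (L v) = L (T v) := by
  have hleft : HasFDerivAt (G ∘ L) (T.comp L) p := by
    rw [← hp] at hG
    simpa [hp] using hG.comp p L.hasFDerivAt
  have hright : HasFDerivAt (L ∘ G) (L.comp T) p := L.hasFDerivAt.comp p hG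
  rw [hGL] at hleft
  exact DFunLike.congr_fun (hleft.unique hright) v

theorem LinearIsometryEquiv.apply_eq_or_eq_neg_of_eigenvector (L : F ≃ₗᵢ[ℝ] F)
    {T : F →ₗ[ℝ] F} {lam : ℝ} {e : F} (he : e ≠ 0) (heig : T e = lam • e)
    (hspan : ∀ v, T v = lam • v → ∃ c : ℝ, v = c • e) (hTL : T (L e) = L (T e)) :
    L e = e ∨ L e = -e := by
  obtain ⟨c, hc⟩ := hspan (L e) (by rw [hTL, heig, map_smul])
  have hc_abs : |c| = 1 := by
    have hnorm : |c| * ‖e‖ = 1 * ‖e‖ := by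
      rw [← Real.norm_eq_abs, ← norm_smul, ← hc, L.norm_map, one_mul]
    exact mul_right_cancel₀ (norm_ne_zero_iff.mpr he) hnorm
  rcases abs_eq zero_le_one |>.mp hc_abs with rfl | rfl
  · exact .inl (by rw [hc, one_smul])
  · exact .inr (by rw [hc, neg_one_smul])

variable [CompleteSpace F]

theorem LinearIsometryEquiv.gradient_apply_of_comp_eq (L : F ≃ₗᵢ[ℝ] F) {f : F → ℝ}
    (hfL : f ∘ L = f) (x : F) : gradient f (L x) = L (gradient f x) := by
  refine ext_inner_right ℝ fun v => ?_
  obtain ⟨w, rfl⟩ := L.surjective v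
  have hchain : fderiv ℝ f x w = fderiv ℝ f (L x) (L w) := by
    conv_lhs => rw [← hfL]
    exact congr($(L.toContinuousLinearEquiv.comp_right_fderiv (f := f) (x := x)) w)
  rw [inner_gradient_left, L.inner_map_map, inner_gradient_left, hchain]

structure IsFlowLineFrom (V : F → ℝ) (γ : ℝ → F) (p d : F) : Prop where
  hasDerivAt : ∀ s, HasDerivAt γ (-gradient V (γ s)) s
  gradient_ne_zero : ∀ s, gradient V (γ s) ≠ 0
  tendsto_atBot : Tendsto γ atBot (𝓝 p)
  tendsto_direction :
    Tendsto (fun s => -(‖gradient V (γ s)‖⁻¹ • gradient V (γ s))) atBot (𝓝 d)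

def FlowLinesUniqueFromDirection (V : F → ℝ) : Prop :=
  ∀ (γ₁ γ₂ : ℝ → F) (p d : F), IsFlowLineFrom V γ₁ p d → IsFlowLineFrom V γ₂ p d →
    ∃ s₀ : ℝ, ∀ s, γ₁ s = γ₂ (s + s₀)

variable {V : F → ℝ} {γ γ₁ γ₂ : ℝ → F} {p d r₁ r₂ : F}

theorem IsFlowLineFrom.map (h : IsFlowLineFrom V γ p d) (L : F ≃ₗᵢ[ℝ] F)
    (hgrad : ∀ x, gradient V (L x) = L (gradient V x)) :
    IsFlowLineFrom V (L ∘ γ) (L p) (L d) where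
  hasDerivAt s := by
    simpa [hgrad] using L.toContinuousLinearEquiv.hasFDerivAt.comp_hasDerivAt s (h.hasDerivAt s)
  gradient_ne_zero s := by simpa [hgrad] using h.gradient_ne_zero s
  tendsto_atBot := (L.continuous.tendsto p).comp h.tendsto_atBot
  tendsto_direction := by
    simpa [Function.comp_def, hgrad] using (L.continuous.tendsto d).comp h.tendsto_direction

theorem FlowLinesUniqueFromDirection.tendsto_atTop_unique (hV : FlowLinesUniqueFromDirection V)
    (h₁ : IsFlowLineFrom V γ₁ p d) (h₂ : IsFlowLineFrom V γ₂ p d)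
    (ht₁ : Tendsto γ₁ atTop (𝓝 r₁)) (ht₂ : Tendsto γ₂ atTop (𝓝 r₂)) : r₁ = r₂ := by
  obtain ⟨s₀, hs₀⟩ := hV γ₁ γ₂ p d h₁ h₂
  have ht₂' : Tendsto γ₁ atTop (𝓝 r₂) := by
    rw [funext hs₀]
    exact ht₂.comp (tendsto_atTop_add_const_right atTop s₀ tendsto_id)
  exact tendsto_nhds_unique ht₁ ht₂'

theorem FlowLinesUniqueFromDirection.map_eq_of_tendsto (hV : FlowLinesUniqueFromDirection V)
    (L : F ≃ₗᵢ[ℝ] F) (hgrad : ∀ x, gradient V (L x) = L (gradient V x)) (hp : L p = p)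
    ⦃γ₁ γ₂ : ℝ → F⦄ ⦃d r₁ r₂ : F⦄
    (h₁ : IsFlowLineFrom V γ₁ p d) (h₂ : IsFlowLineFrom V γ₂ p (L d))
    (ht₁ : Tendsto γ₁ atTop (𝓝 r₁)) (ht₂ : Tendsto γ₂ atTop (𝓝 r₂)) : L r₁ = r₂ := by
  have hL₁ := h₁.map L hgrad
  rw [hp] at hL₁
  exact hV.tendsto_atTop_unique hL₁ h₂ ((L.continuous.tendsto r₁).comp ht₁) ht₂

end GradientFlow

section Symmetry

variable (N : ℕ)

noncomputable def permActIsometry (σ : Equiv.Perm (Fin N)) : Conf N ≃ₗᵢ[ℝ] Conf N :=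
  LinearIsometryEquiv.piLpCongrLeft 2 ℝ (EuclideanSpace ℝ (Fin 3)) σ.symm

theorem coe_permActIsometry (σ : Equiv.Perm (Fin N)) : ⇑(permActIsometry N σ) = permAct N σ :=
  rfl

noncomputable def rotActIsometry {A : Matrix (Fin 3) (Fin 3) ℝ}
    (hA : A ∈ Matrix.orthogonalGroup (Fin 3) ℝ) : Conf N ≃ₗᵢ[ℝ] Conf N :=
  LinearIsometryEquiv.piLpCongrRight 2 fun _ =>
    Unitary.linearIsometryEquiv ⟨Matrix.toEuclideanCLM (𝕜 := ℝ) A, Unitary.map_mem _ hA⟩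

theorem coe_rotActIsometry {A : Matrix (Fin 3) (Fin 3) ℝ}
    (hA : A ∈ Matrix.orthogonalGroup (Fin 3) ℝ) : ⇑(rotActIsometry N hA) = rotAct N A :=
  rfl

noncomputable def relabelIsometry (σ : Equiv.Perm (Fin N)) {A : Matrix (Fin 3) (Fin 3) ℝ}
    (hA : A ∈ Matrix.orthogonalGroup (Fin 3) ℝ) : Conf N ≃ₗᵢ[ℝ] Conf N :=
  (permActIsometry N σ).trans (rotActIsometry N hA).symm

variable {N} {σ : Equiv.Perm (Fin N)} {A : Matrix (Fin 3) (Fin 3) ℝ}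
  (hA : A ∈ Matrix.orthogonalGroup (Fin 3) ℝ)

theorem relabelIsometry_apply_eq_iff (x y : Conf N) :
    relabelIsometry N σ hA x = y ↔ rotAct N A y = permAct N σ x := by
  rw [relabelIsometry, LinearIsometryEquiv.trans_apply, LinearIsometryEquiv.symm_apply_eq,
    coe_rotActIsometry, coe_permActIsometry, eq_comm]

theorem comp_relabelIsometry {V : Conf N → ℝ} (hVA : ∀ r, V (rotAct N A r) = V r)
    (hVσ : ∀ r, V (permAct N σ r) = V r) : V ∘ relabelIsometry N σ hA = V := by
  funext r
  rw [Function.comp_apply, ← hVA, (relabelIsometry_apply_eq_iff hA r _).mp rfl, hVσ]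

end Symmetry

set_option synthInstance.maxHeartbeats 400000 in
set_option maxHeartbeats 4000000 in
theorem reaction_path_endpoint_dichotomy_general (N : ℕ) (σ : Equiv.Perm (Fin N)) (V : Conf N → ℝ)
    (hinvO : ∀ A : Matrix (Fin 3) (Fin 3) ℝ, A ∈ Matrix.orthogonalGroup (Fin 3) ℝ →
      ∀ r : Conf N, V (rotAct N A r) = V r)
    (hinvσ : ∀ r : Conf N, V (permAct N σ r) = V r)
    (H : Conf N → Conf N →L[ℝ] Conf N)
    (hH : ∀ x : Conf N, HasFDerivAt (gradient V) (H x) x)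
    (rdd : Conf N)
    (lam : ℝ) (e : Conf N) (he : ‖e‖ = 1)
    (heig : H rdd e = lam • e)
    (hspan : ∀ v : Conf N, H rdd v = lam • v → ∃ c : ℝ, v = c • e)
    (γp γm : ℝ → Conf N) (rR rP : Conf N)
    (hγp : ∀ s : ℝ, HasDerivAt γp (-gradient V (γp s)) s)
    (hγm : ∀ s : ℝ, HasDerivAt γm (-gradient V (γm s)) s)
    (hnep : ∀ s : ℝ, gradient V (γp s) ≠ 0)
    (hnem : ∀ s : ℝ, gradient V (γm s) ≠ 0)
    (hbotp : Tendsto γp atBot (nhds rdd))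
    (hbotm : Tendsto γm atBot (nhds rdd))
    (hdirp : Tendsto (fun s => -(‖gradient V (γp s)‖⁻¹ • gradient V (γp s))) atBot (nhds e))
    (hdirm : Tendsto (fun s => -(‖gradient V (γm s)‖⁻¹ • gradient V (γm s))) atBot
      (nhds (-e)))
    (htopm : Tendsto γm atTop (nhds rR))
    (htopp : Tendsto γp atTop (nhds rP))
    (huniq : ∀ (γ₁ γ₂ : ℝ → Conf N) (p d : Conf N),
      (∀ s : ℝ, HasDerivAt γ₁ (-gradient V (γ₁ s)) s) →
      (∀ s : ℝ, HasDerivAt γ₂ (-gradient V (γ₂ s)) s) →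
      (∀ s : ℝ, gradient V (γ₁ s) ≠ 0) → (∀ s : ℝ, gradient V (γ₂ s) ≠ 0) →
      Tendsto γ₁ atBot (nhds p) → Tendsto γ₂ atBot (nhds p) →
      Tendsto (fun s => -(‖gradient V (γ₁ s)‖⁻¹ • gradient V (γ₁ s))) atBot (nhds d) →
      Tendsto (fun s => -(‖gradient V (γ₂ s)‖⁻¹ • gradient V (γ₂ s))) atBot (nhds d) →
      ∃ s₀ : ℝ, ∀ s : ℝ, γ₁ s = γ₂ (s + s₀))
    (A : Matrix (Fin 3) (Fin 3) ℝ) (hA : A ∈ Matrix.orthogonalGroup (Fin 3) ℝ)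
    (hg : permAct N σ rdd = rotAct N A rdd) :
    (rotAct N A rR = permAct N σ rR ∧ rotAct N A rP = permAct N σ rP) ∨
    (rotAct N A rR = permAct N σ rP ∧ rotAct N A rP = permAct N σ rR) := by
  set L := relabelIsometry N σ hA
  simp only [← relabelIsometry_apply_eq_iff hA]
  have hgrad := L.gradient_apply_of_comp_eq (comp_relabelIsometry hA (hinvO A hA) hinvσ)
  have hfix : L rdd = rdd := (relabelIsometry_apply_eq_iff hA _ _).mpr hg.symm
  have hHL : H rdd (L e) = L (H rdd e) :=
    (hH rdd).apply_map_eq_of_comp_eq (L : Conf N →L[ℝ] Conf N) (funext hgrad) hfix e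
  have hunique : FlowLinesUniqueFromDirection V := fun γ₁ γ₂ p d h₁ h₂ =>
    huniq γ₁ γ₂ p d h₁.1 h₂.1 h₁.2 h₂.2 h₁.3 h₂.3 h₁.4 h₂.4
  have fp : IsFlowLineFrom V γp rdd e := ⟨hγp, hnep, hbotp, hdirp⟩
  have fm : IsFlowLineFrom V γm rdd (-e) := ⟨hγm, hnem, hbotm, hdirm⟩
  have hendpoint := hunique.map_eq_of_tendsto L hgrad hfix
  rcases L.apply_eq_or_eq_neg_of_eigenvector (T := (H rdd : Conf N →ₗ[ℝ] Conf N))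
    (norm_ne_zero_iff.mp (by simp [he])) heig hspan hHL with hLe | hLe
  · exact .inl ⟨hendpoint fm (by rwa [map_neg, hLe]) htopm htopm,
      hendpoint fp (by rwa [hLe]) htopp htopp⟩
  · exact .inr ⟨hendpoint fp (by rwa [hLe]) htopp htopm,
      hendpoint fm (by rwa [map_neg, hLe, neg_neg]) htopm htopp⟩

set_option synthInstance.maxHeartbeats 400000 in
set_option maxHeartbeats 4000000 in
/-- Lemma 2, core dichotomy: let `V` be C², invariant under the diagonal
`O(3)`-action and under a permutation `σ`; let `r‡` be a stationary point whose Hessian (the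
derivative of the gradient vector field) has a one-dimensional negative eigenspace spanned by
a unit vector `e`. Let `γ₊, γ₋` be negative-gradient-flow solutions with nowhere-vanishing
gradient emanating from `r‡` in the limiting directions `±e` as `s → −∞` and converging to
`r_P`, `r_R` respectively as `s → +∞`. Assume the uniqueness property: any two gradient-flow
solutions converging as `s → −∞` to the same point with the same limiting normalized
negative-gradient direction coincide up to a parameter translation. If `σ·r‡ = g·r‡` for some
`A ∈ O(3)` acting diagonally as `g`, then either (`g·r_R = σ·r_R` and `g·r_P = σ·r_P`) or
(`g·r_R = σ·r_P` and `g·r_P = σ·r_R`). -/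
theorem reaction_path_endpoint_dichotomy (N : ℕ) (σ : Equiv.Perm (Fin N)) (V : Conf N → ℝ)
    (hV : ContDiff ℝ 2 V)
    (hinvO : ∀ A : Matrix (Fin 3) (Fin 3) ℝ, A ∈ Matrix.orthogonalGroup (Fin 3) ℝ →
      ∀ r : Conf N, V (rotAct N A r) = V r)
    (hinvσ : ∀ r : Conf N, V (permAct N σ r) = V r)
    (H : Conf N → Conf N →L[ℝ] Conf N)
    (hH : ∀ x : Conf N, HasFDerivAt (gradient V) (H x) x)
    (rdd : Conf N) (hstat : gradient V rdd = 0)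
    (lam : ℝ) (hlam : lam < 0) (e : Conf N) (he : ‖e‖ = 1)
    (heig : H rdd e = lam • e)
    (hspan : ∀ v : Conf N, H rdd v = lam • v → ∃ c : ℝ, v = c • e)
    (γp γm : ℝ → Conf N) (rR rP : Conf N)
    (hγp : ∀ s : ℝ, HasDerivAt γp (-gradient V (γp s)) s)
    (hγm : ∀ s : ℝ, HasDerivAt γm (-gradient V (γm s)) s)
    (hnep : ∀ s : ℝ, gradient V (γp s) ≠ 0)
    (hnem : ∀ s : ℝ, gradient V (γm s) ≠ 0)
    (hbotp : Tendsto γp atBot (nhds rdd))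
    (hbotm : Tendsto γm atBot (nhds rdd))
    (hdirp : Tendsto (fun s => -(‖gradient V (γp s)‖⁻¹ • gradient V (γp s))) atBot (nhds e))
    (hdirm : Tendsto (fun s => -(‖gradient V (γm s)‖⁻¹ • gradient V (γm s))) atBot
      (nhds (-e)))
    (htopm : Tendsto γm atTop (nhds rR))
    (htopp : Tendsto γp atTop (nhds rP))
    (huniq : ∀ (γ₁ γ₂ : ℝ → Conf N) (p d : Conf N),
      (∀ s : ℝ, HasDerivAt γ₁ (-gradient V (γ₁ s)) s) →
      (∀ s : ℝ, HasDerivAt γ₂ (-gradient V (γ₂ s)) s) →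
      (∀ s : ℝ, gradient V (γ₁ s) ≠ 0) → (∀ s : ℝ, gradient V (γ₂ s) ≠ 0) →
      Tendsto γ₁ atBot (nhds p) → Tendsto γ₂ atBot (nhds p) →
      Tendsto (fun s => -(‖gradient V (γ₁ s)‖⁻¹ • gradient V (γ₁ s))) atBot (nhds d) →
      Tendsto (fun s => -(‖gradient V (γ₂ s)‖⁻¹ • gradient V (γ₂ s))) atBot (nhds d) →
      ∃ s₀ : ℝ, ∀ s : ℝ, γ₁ s = γ₂ (s + s₀))
    (A : Matrix (Fin 3) (Fin 3) ℝ) (hA : A ∈ Matrix.orthogonalGroup (Fin 3) ℝ)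
    (hg : permAct N σ rdd = rotAct N A rdd) :
    (rotAct N A rR = permAct N σ rR ∧ rotAct N A rP = permAct N σ rP) ∨
    (rotAct N A rR = permAct N σ rP ∧ rotAct N A rP = permAct N σ rR) :=
  reaction_path_endpoint_dichotomy_general N σ V hinvO hinvσ H hH rdd lam e he heig hspan γp γm rR
    rP hγp hγm hnep hnem hbotp hbotm hdirp hdirm htopm htopp huniq A hA hg
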